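/- arXiv:0809.3225 — 2 statements merged into one kernel-verified Lean document; each statement's English description precedes it below -/
import Mathlib

section
/- Let n ≥ 1, let f ∈ ℂ[z_1,…,z_n] be a multiaffine polynomial invariant under all permutations of the variables, and let A ⊂ ℂ be a convex circular region. Then for any ζ_1,…,ζ_n ∈ A there exists ζ ∈ A such that f(ζ_1,…,ζ_n) = f(ζ,…,ζ). -/
open MvPolynomial

/-- A polynomial is multiaffine if it has degree at most 1 in each variable. -/
def IsMultiaffine {σ : Type*} (f : MvPolynomial σ ℂ) : Prop :=
  ∀ i, degreeOf i f ≤ 1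

/-- A circular region: a proper subset of ℂ bounded by a circle or a straight line,
and either open or closed. Concretely: an open or closed disk, the open or closed
complement of a disk, or an open or closed half-plane. -/
def IsCircularRegion (A : Set ℂ) : Prop :=
  (∃ c : ℂ, ∃ r : ℝ, 0 < r ∧
    (A = Metric.ball c r ∨ A = Metric.closedBall c r ∨
     A = (Metric.closedBall c r)ᶜ ∨ A = (Metric.ball c r)ᶜ)) ∨
  (∃ a : ℂ, a ≠ 0 ∧ ∃ t : ℝ,
    (A = {z : ℂ | t < (a * z).im} ∨ A = {z : ℂ | t ≤ (a * z).im}))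

/-!
Induct on the set `S` of coordinates already replaced by a common point `w ∈ A`. To absorb one more
coordinate, with value `ζ ∈ A`, note that symmetry and multiaffinity give
`n f(ζ, w, …, w) = n F(w) + (ζ - w) F'(w)`, where `F` is `f` restricted to the diagonal of `S` and
`n = |S| ≥ deg F`. So we need a root in `A` of `G = F - v`, where `n v` is this polar derivative.
If `G` had none, `n G(w) + (ζ - w) G'(w) = 0` would make `(w - ζ)⁻¹` the average of the numbers
`(w - r)⁻¹` over the roots `r` of `G`, padded with zeros to `n` terms. But for `w ∈ A` the image of
`ℂ \ A` under `r ↦ (w - r)⁻¹`, together with `0`, is convex (Laguerre): multiplied by `|u|²`, the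
inequality cutting out `ℂ \ A` becomes a convex quadratic inequality in `u`. Hence `ζ ∉ A`.
-/

open Polynomial ComplexConjugate
open scoped Pointwise

theorem Polynomial.eval_eq_eval_add_mul_eval_derivative_of_natDegree_le_one {R : Type*}
    [CommRing R] {p : R[X]} (hp : p.natDegree ≤ 1) (x y : R) :
    p.eval y = p.eval x + (y - x) * p.derivative.eval x := by
  rw [eq_X_add_C_of_natDegree_le_one hp]
  simp only [Polynomial.eval_add, Polynomial.eval_mul, Polynomial.eval_C, Polynomial.eval_X,
    derivative_add, derivative_mul, derivative_C, derivative_X, zero_mul, mul_one, zero_add,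
    add_zero]
  ring

theorem Polynomial.Splits.eval_derivative_eq_mul_sum_inv {K : Type*} [Field K] {f : K[X]}
    (hf : f.Splits) {x : K} (hx : f.eval x ≠ 0) :
    f.derivative.eval x = f.eval x * (f.roots.map fun r => (x - r)⁻¹).sum := by
  classical
  have hroot : ∀ r ∈ f.roots, x - r ≠ 0 := fun r hr h => by
    rw [sub_eq_zero.mp h] at hx
    exact hx (isRoot_of_mem_roots hr)
  rw [hf.eval_derivative, hf.eval_eq_prod_roots, mul_assoc]
  congr 1
  rw [← Multiset.sum_map_mul_left]
  congr 1
  refine Multiset.map_congr rfl fun r hr => ?_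
  rw [← Multiset.prod_map_erase (f := (x - ·)) hr, mul_right_comm, mul_inv_cancel₀ (hroot r hr),
    one_mul]

namespace MvPolynomial

variable {R σ : Type*} [CommRing R]

theorem natDegree_aeval_le [Fintype σ] (g : σ → R[X]) (f : MvPolynomial σ R) :
    (aeval g f).natDegree ≤ ∑ i, degreeOf i f * (g i).natDegree := by
  conv_lhs => rw [← support_sum_monomial_coeff f]
  rw [map_sum]
  refine natDegree_sum_le_of_forall_le _ _ fun m hm => ?_
  rw [aeval_monomial, Finsupp.prod_fintype _ _ fun _ => pow_zero _, Polynomial.algebraMap_eq]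
  refine (natDegree_C_mul_le _ _).trans <| (natDegree_prod_le _ _).trans <|
    Finset.sum_le_sum fun i _ => natDegree_pow_le.trans ?_
  exact Nat.mul_le_mul_right _ (monomial_le_degreeOf i hm)

theorem derivative_aeval [Fintype σ] (g : σ → R[X]) (f : MvPolynomial σ R) :
    derivative (aeval g f) = ∑ i, aeval g (pderiv i f) * derivative (g i) := by
  classical
  induction f using MvPolynomial.induction_on with
  | C a => simp
  | add p q hp hq => simp [hp, hq, Finset.sum_add_distrib, add_mul]
  | mul_X p j hp =>
    simp only [map_mul, derivative_mul, aeval_X, hp, Derivation.leibniz, pderiv_X,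
      Pi.single_apply, smul_eq_mul, map_add, add_mul, Finset.sum_add_distrib, Finset.sum_mul]
    simp [apply_ite (aeval g), mul_assoc, mul_comm, add_comm]

variable [DecidableEq σ] {f : MvPolynomial σ R}

theorem eval_update_eq_of_forall_rename_eq (hsym : ∀ e : Equiv.Perm σ, rename e f = f)
    {q : σ → R} {i j : σ} (hq : q i = q j) (y : R) :
    eval (Function.update q i y) f = eval (Function.update q j y) f := by
  conv_rhs => rw [← hsym (Equiv.swap i j), eval_rename, Equiv.comp_swap_eq_update]
  rcases eq_or_ne i j with rfl | hij
  · simp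
  · simp [Function.update_of_ne hij, hq]

noncomputable def diagonalOn (S : Finset σ) (b : σ → R) (f : MvPolynomial σ R) : R[X] :=
  aeval (S.piecewise (fun _ => Polynomial.X) (Polynomial.C ∘ b)) f

variable {S : Finset σ} {b : σ → R}

theorem eval_diagonalOn (t : R) :
    (diagonalOn S b f).eval t = eval (S.piecewise (fun _ => t) b) f := by
  rw [diagonalOn, ← Polynomial.coe_aeval_eq_eval, ← AlgHom.comp_apply, comp_aeval,
    ← coe_aeval_eq_eval]
  exact congrArg (aeval · f) (_root_.funext fun i => by by_cases hi : i ∈ S <;> simp [hi])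

variable [Fintype σ]

theorem natDegree_diagonalOn_le (hf : ∀ i ∈ S, degreeOf i f ≤ 1) :
    (diagonalOn S b f).natDegree ≤ S.card := by
  refine (natDegree_aeval_le _ _).trans ?_
  calc ∑ i, degreeOf i f * (S.piecewise (fun _ => Polynomial.X) (Polynomial.C ∘ b) i).natDegree
      ≤ ∑ i, if i ∈ S then 1 else 0 := Finset.sum_le_sum fun i _ => by
        by_cases hi : i ∈ S
        · simpa [hi] using Nat.mul_le_mul (hf i hi) natDegree_X_le
        · simp [hi]
    _ = S.card := by simp

theorem derivative_diagonalOn :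
    derivative (diagonalOn S b f) = ∑ i ∈ S, diagonalOn S b (pderiv i f) := by
  rw [diagonalOn, derivative_aeval, ← Finset.sum_subset (Finset.subset_univ S)]
  · refine Finset.sum_congr rfl fun i hi => ?_
    simp [hi, diagonalOn]
  · intro i _ hi
    simp [hi]

theorem eval_update_of_degreeOf_le_one (p : σ → R) {i : σ} (hf : degreeOf i f ≤ 1) (y : R) :
    eval (Function.update p i y) f = eval p f + (y - p i) * eval p (pderiv i f) := by
  have h := Polynomial.eval_eq_eval_add_mul_eval_derivative_of_natDegree_le_one
    (natDegree_diagonalOn_le (S := {i}) (b := p) (by simpa using hf)) (p i) y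
  rwa [derivative_diagonalOn, Finset.sum_singleton, eval_diagonalOn, eval_diagonalOn,
    eval_diagonalOn, Finset.piecewise_singleton, Finset.piecewise_singleton,
    Function.update_eq_self] at h

theorem sum_eval_update_piecewise (S : Finset σ) (b : σ → R) (hf : ∀ i ∈ S, degreeOf i f ≤ 1)
    (x y : R) :
    ∑ i ∈ S, eval (Function.update (S.piecewise (fun _ => x) b) i y) f =
      S.card * (diagonalOn S b f).eval x + (y - x) * (diagonalOn S b f).derivative.eval x := by
  rw [derivative_diagonalOn, eval_finsetSum, Finset.mul_sum, eval_diagonalOn]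
  simp only [eval_diagonalOn]
  rw [← nsmul_eq_mul, ← Finset.sum_const, ← Finset.sum_add_distrib]
  refine Finset.sum_congr rfl fun i hi => ?_
  rw [eval_update_of_degreeOf_le_one _ (hf i hi), Finset.piecewise_eq_of_mem _ _ _ hi]

theorem card_mul_eval_update_piecewise (hsym : ∀ e : Equiv.Perm σ, rename e f = f)
    (b : σ → R) (hf : ∀ i ∈ S, degreeOf i f ≤ 1) {a : σ} (ha : a ∈ S) (x y : R) :
    S.card * eval (Function.update (S.piecewise (fun _ => x) b) a y) f =
      S.card * (diagonalOn S b f).eval x + (y - x) * (diagonalOn S b f).derivative.eval x := by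
  rw [← sum_eval_update_piecewise S b hf, ← nsmul_eq_mul, ← Finset.sum_const]
  refine Finset.sum_congr rfl fun i hi => eval_update_eq_of_forall_rename_eq hsym ?_ y
  simp [Finset.piecewise_eq_of_mem _ _ _ ha, Finset.piecewise_eq_of_mem _ _ _ hi]

end MvPolynomial

section Convex

variable {𝕜 E : Type*} [Field 𝕜] [LinearOrder 𝕜] [IsStrictOrderedRing 𝕜] [AddCommGroup E]
  [Module 𝕜 E] {K : Set E}

theorem Convex.multiset_sum_mem_card_smul (hK : Convex 𝕜 K) (hne : K.Nonempty) {M : Multiset E}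
    (hM : ∀ x ∈ M, x ∈ K) : M.sum ∈ (Multiset.card M : 𝕜) • K := by
  induction M using Multiset.induction_on with
  | empty => simp [Set.zero_smul_set hne]
  | cons a M ih =>
    rw [Multiset.sum_cons, Multiset.card_cons, Nat.cast_add_one, add_comm _ (1 : 𝕜),
      hK.add_smul zero_le_one (Nat.cast_nonneg _), one_smul]
    exact Set.add_mem_add (hM a (Multiset.mem_cons_self a M))
      (ih fun x hx => hM x (Multiset.mem_cons_of_mem hx))

theorem Convex.inv_natCast_smul_multiset_sum_mem (hK : Convex 𝕜 K) (h0 : 0 ∈ K) {M : Multiset E}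
    (hM : ∀ x ∈ M, x ∈ K) {n : ℕ} (hn : Multiset.card M ≤ n) : (n : 𝕜)⁻¹ • M.sum ∈ K := by
  rcases n.eq_zero_or_pos with rfl | hn0
  · simpa using h0
  obtain ⟨k, hk, hsum⟩ := hK.multiset_sum_mem_card_smul ⟨0, h0⟩ hM
  rw [← hsum, smul_smul]
  refine hK.smul_mem_of_zero_mem h0 hk ⟨by positivity, ?_⟩
  rw [inv_mul_le_iff₀ (by positivity), mul_one]
  exact_mod_cast hn

end Convex

theorem ConvexOn.convex_setOf_eq_zero_or_lt {E : Type*} [AddCommGroup E] [Module ℝ E]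
    {p : E → ℝ} (hp : ConvexOn ℝ Set.univ p) (h0 : p 0 ≤ 0) :
    Convex ℝ {u | u = 0 ∨ p u < 0} := by
  intro x hx y hy a b ha hb hab
  rcases ha.eq_or_lt with rfl | ha
  · obtain rfl : b = 1 := by simpa using hab
    simpa using hy
  rcases hb.eq_or_lt with rfl | hb
  · obtain rfl : a = 1 := by simpa using hab
    simpa using hx
  by_cases hxy : x = 0 ∧ y = 0
  · simp [hxy]
  right
  refine (hp.2 trivial trivial ha.le hb.le hab).trans_lt ?_
  simp only [smul_eq_mul]
  rcases hx with rfl | hx <;> rcases hy with rfl | hy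
  · exact absurd ⟨rfl, rfl⟩ hxy
  all_goals nlinarith

theorem convexOn_mul_norm_sq_add_re_mul {a : ℝ} (ha : 0 ≤ a) (γ : ℂ) (d : ℝ) :
    ConvexOn ℝ Set.univ fun u : ℂ => a * ‖u‖ ^ 2 + (γ * u).re + d := by
  have hsq : ConvexOn ℝ Set.univ fun u : ℂ => ‖u‖ ^ 2 :=
    (convexOn_norm convex_univ).pow (fun _ _ => norm_nonneg _) 2
  have hlin : ConvexOn ℝ Set.univ fun u : ℂ => (γ * u).re :=
    (Complex.reLm.comp (LinearMap.mulLeft ℝ γ)).convexOn convex_univ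
  exact ((hsq.smul ha).add hlin).add_const d

theorem Complex.not_convex_of_forall_lt_dist_mem {s : Set ℂ} {c : ℂ} {r : ℝ} (hc : c ∉ s)
    (hs : ∀ z, r < dist z c → z ∈ s) : ¬ Convex ℝ s := by
  intro hconv
  set d : ℂ := ((|r| + 1 : ℝ) : ℂ)
  have hd : ∀ z, ‖z‖ = |r| + 1 → z + c ∈ s := fun z hz => hs _ <| by
    rw [dist_eq_norm, add_sub_cancel_right, hz]
    linarith [le_abs_self r]
  have hnorm : ‖d‖ = |r| + 1 := by
    rw [Complex.norm_real, Real.norm_of_nonneg (by positivity)]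
  have := hconv (hd d hnorm) (hd (-d) (by rw [norm_neg, hnorm])) (by norm_num : (0:ℝ) ≤ 1/2)
    (by norm_num : (0:ℝ) ≤ 1/2) (by norm_num)
  apply hc
  convert this using 1
  module

section CircularRegion

open Complex

noncomputable def circleQuad (c : ℝ) (β : ℂ) (l : ℝ) (z : ℂ) : ℝ :=
  c + (β * z).re - l * ‖z‖ ^ 2

theorem circleQuad_ball (c₀ : ℂ) (ρ : ℝ) (z : ℂ) :
    circleQuad (ρ ^ 2 - ‖c₀‖ ^ 2) (2 * conj c₀) 1 z = ρ ^ 2 - ‖z - c₀‖ ^ 2 := by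
  simp only [circleQuad, Complex.sq_norm, normSq_apply, mul_re, sub_re, sub_im, conj_re, conj_im,
    mul_im, re_ofNat, im_ofNat]
  ring

theorem circleQuad_halfPlane (a : ℂ) (t : ℝ) (z : ℂ) :
    circleQuad (-t) (-(I * a)) 0 z = (a * z).im - t := by
  simp only [circleQuad, neg_mul, neg_re, mul_re, I_re, I_im, mul_im]
  ring

theorem mul_circleQuad_sub_inv (c : ℝ) (β : ℂ) (l : ℝ) (w : ℂ) {u : ℂ} (hu : u ≠ 0) :
    ‖u‖ ^ 2 * circleQuad c β l (w - u⁻¹) =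
      circleQuad c β l w * ‖u‖ ^ 2 + ((2 * l * w - conj β) * u).re - l := by
  have hn : u.re ^ 2 + u.im ^ 2 ≠ 0 := by
    simpa only [normSq_apply, sq] using normSq_eq_zero.not.mpr hu
  simp only [circleQuad, Complex.sq_norm, normSq_apply, mul_re, mul_im, sub_re, sub_im, inv_re,
    inv_im, conj_re, conj_im, ofReal_re, ofReal_im, re_ofNat, im_ofNat, ← sq]
  field_simp
  ring

variable {A : Set ℂ}

theorem IsCircularRegion.exists_eq_setOf (hA : IsCircularRegion A) (hconv : Convex ℝ A) :
    ∃ c β l, 0 ≤ l ∧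
      (A = {z | 0 < circleQuad c β l z} ∨ A = {z | 0 ≤ circleQuad c β l z}) := by
  rcases hA with ⟨c₀, ρ, hρ, rfl | rfl | rfl | rfl⟩ | ⟨a, -, t, rfl | rfl⟩
  · refine ⟨ρ ^ 2 - ‖c₀‖ ^ 2, 2 * conj c₀, 1, zero_le_one, Or.inl (Set.ext fun z => ?_)⟩
    rw [Set.mem_ofPred_eq, circleQuad_ball, sub_pos, Metric.mem_ball, dist_eq_norm,
      sq_lt_sq₀ (norm_nonneg _) hρ.le]
  · refine ⟨ρ ^ 2 - ‖c₀‖ ^ 2, 2 * conj c₀, 1, zero_le_one, Or.inr (Set.ext fun z => ?_)⟩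
    rw [Set.mem_ofPred_eq, circleQuad_ball, sub_nonneg, Metric.mem_closedBall, dist_eq_norm,
      sq_le_sq₀ (norm_nonneg _) hρ.le]
  · exact absurd hconv <| Complex.not_convex_of_forall_lt_dist_mem (c := c₀)
      (by simpa using hρ.le) fun z hz => by simpa using hz
  · exact absurd hconv <| Complex.not_convex_of_forall_lt_dist_mem (c := c₀)
      (by simpa using hρ) fun z hz => by simpa using hz.le
  · exact ⟨-t, -(I * a), 0, le_rfl, Or.inl (by simp only [circleQuad_halfPlane, sub_pos])⟩
  · exact ⟨-t, -(I * a), 0, le_rfl, Or.inr (by simp only [circleQuad_halfPlane, sub_nonneg])⟩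

theorem IsCircularRegion.convex_setOf_eq_zero_or_sub_inv_notMem (hA : IsCircularRegion A)
    (hconv : Convex ℝ A) {w : ℂ} (hw : w ∈ A) : Convex ℝ {u : ℂ | u = 0 ∨ w - u⁻¹ ∉ A} := by
  obtain ⟨c, β, l, hl, hA⟩ := hA.exists_eq_setOf hconv
  have hw0 : 0 ≤ circleQuad c β l w := by
    rcases hA with rfl | rfl
    exacts [le_of_lt hw, hw]
  set p : ℂ → ℝ := fun u => circleQuad c β l w * ‖u‖ ^ 2 + ((2 * l * w - conj β) * u).re + -l
  have hp : ConvexOn ℝ Set.univ p := convexOn_mul_norm_sq_add_re_mul hw0 _ _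
  have hp0 : p 0 ≤ 0 := by simpa [p] using hl
  have hpq : ∀ u ≠ 0, p u = ‖u‖ ^ 2 * circleQuad c β l (w - u⁻¹) := fun u hu => by
    rw [mul_circleQuad_sub_inv c β l w hu, sub_eq_add_neg]
  rcases hA with rfl | rfl
  · convert hp.convex_le 0 using 1
    ext u
    rcases eq_or_ne u 0 with rfl | hu
    · simpa using hp0
    · simp only [Set.mem_ofPred_eq, hu, false_or, Set.mem_univ, true_and, not_lt, hpq u hu]
      rw [← not_lt, ← not_lt, mul_pos_iff_of_pos_left (by positivity)]
  · suffices hK : {u : ℂ | u = 0 ∨ w - u⁻¹ ∉ {z | 0 ≤ circleQuad c β l z}} =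
        {u | u = 0 ∨ p u < 0} from hK ▸ hp.convex_setOf_eq_zero_or_lt hp0
    ext u
    rcases eq_or_ne u 0 with rfl | hu
    · simp
    · simp only [Set.mem_ofPred_eq, hu, false_or, not_le, hpq u hu]
      rw [← not_le, ← not_le, mul_nonneg_iff_of_pos_left (by positivity)]

theorem IsCircularRegion.polar_ne_zero (hA : IsCircularRegion A) (hconv : Convex ℝ A) {n : ℕ}
    (hn : n ≠ 0) {G : ℂ[X]} (hG : G.natDegree ≤ n) (hroots : ∀ z ∈ A, G.eval z ≠ 0)
    {w ζ : ℂ} (hw : w ∈ A) (hζ : ζ ∈ A) :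
    n * G.eval w + (ζ - w) * G.derivative.eval w ≠ 0 := by
  intro h
  set U := G.roots.map fun r => (w - r)⁻¹
  have hGw := hroots w hw
  have hnU : (n : ℂ) = (w - ζ) * U.sum := by
    rw [(IsAlgClosed.splits G).eval_derivative_eq_mul_sum_inv hGw] at h
    apply mul_left_cancel₀ hGw
    linear_combination h
  have hU : ∀ u ∈ U, u = 0 ∨ w - u⁻¹ ∉ A := by
    simp only [U, Multiset.mem_map]
    rintro _ ⟨r, hr, rfl⟩
    rw [inv_inv, sub_sub_cancel]
    exact Or.inr fun hrA => hroots r hrA (isRoot_of_mem_roots hr)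
  have hmean : (n : ℝ)⁻¹ • U.sum = (w - ζ)⁻¹ := by
    have hU0 : U.sum ≠ 0 := fun h0 => by simp [h0, hn] at hnU
    rw [Complex.real_smul, Complex.ofReal_inv, Complex.ofReal_natCast, hnU]
    field_simp
  have hmem := (hA.convex_setOf_eq_zero_or_sub_inv_notMem hconv hw).inv_natCast_smul_multiset_sum_mem
    (Or.inl rfl) hU ((Multiset.card_map _ _).trans_le ((card_roots' G).trans hG))
  rw [hmean] at hmem
  rcases hmem with h0 | hnot
  · rw [inv_eq_zero, sub_eq_zero] at h0
    simp [h0, hn] at hnU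
  · exact hnot (by rwa [inv_inv, sub_sub_cancel])

theorem IsCircularRegion.exists_mul_eval_eq_polar (hA : IsCircularRegion A) (hconv : Convex ℝ A)
    {n : ℕ} (hn : n ≠ 0) {F : ℂ[X]} (hF : F.natDegree ≤ n) {w ζ : ℂ} (hw : w ∈ A) (hζ : ζ ∈ A) :
    ∃ z ∈ A, n * F.eval z = n * F.eval w + (ζ - w) * F.derivative.eval w := by
  by_contra! hne
  have hn' : (n : ℂ) ≠ 0 := Nat.cast_ne_zero.mpr hn
  set v := (n * F.eval w + (ζ - w) * F.derivative.eval w) / n with hv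
  refine hA.polar_ne_zero hconv hn (G := F - Polynomial.C v) (natDegree_sub_C.trans_le hF)
    (fun z hz h => ?_) hw hζ ?_
  · rw [Polynomial.eval_sub, Polynomial.eval_C, sub_eq_zero] at h
    exact hne z hz (by rw [h, hv, mul_div_cancel₀ _ hn'])
  · rw [derivative_sub, derivative_C, sub_zero, Polynomial.eval_sub, Polynomial.eval_C, hv]
    field_simp
    ring

theorem IsCircularRegion.exists_eval_eq_eval_piecewise {σ : Type*} [DecidableEq σ] [Fintype σ]
    (hA : IsCircularRegion A) (hconv : Convex ℝ A) {f : MvPolynomial σ ℂ} (hf : IsMultiaffine f)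
    (hsym : ∀ e : Equiv.Perm σ, rename e f = f) {S : Finset σ} (hS : S.Nonempty) (ζ : σ → ℂ)
    (hζ : ∀ i ∈ S, ζ i ∈ A) : ∃ z ∈ A, eval ζ f = eval (S.piecewise (fun _ => z) ζ) f := by
  induction hS using Finset.Nonempty.cons_induction with
  | singleton a =>
    refine ⟨ζ a, hζ a (Finset.mem_singleton_self a), ?_⟩
    rw [Finset.piecewise_singleton, Function.update_eq_self]
  | cons a S ha hS ih =>
    obtain ⟨w, hw, hζw⟩ := ih fun i hi => hζ i (Finset.mem_cons_of_mem hi)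
    have hcard : (S.cons a ha).card ≠ 0 := (Finset.cons_nonempty ha).card_ne_zero
    obtain ⟨z, hz, hzeq⟩ := hA.exists_mul_eval_eq_polar hconv hcard
      (natDegree_diagonalOn_le (b := ζ) fun i _ => hf i) hw (hζ a (Finset.mem_cons_self a S))
    refine ⟨z, hz, mul_left_cancel₀ (Nat.cast_ne_zero.mpr hcard) ?_⟩
    have hpoint : S.piecewise (fun _ => w) ζ =
        Function.update ((S.cons a ha).piecewise (fun _ => w) ζ) a (ζ a) := by
      rw [Finset.cons_eq_insert, Finset.piecewise_insert, Function.update_idem, eq_comm,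
        Function.update_eq_self_iff, Finset.piecewise_eq_of_notMem _ _ _ ha]
    rw [hζw, hpoint, card_mul_eval_update_piecewise hsym ζ (fun i _ => hf i)
      (Finset.mem_cons_self a S), ← hzeq, eval_diagonalOn]

end CircularRegion

/-- Grace-Walsh-Szegő for convex circular regions: a symmetric multiaffine polynomial
evaluated at points of a convex circular region A takes a value it also attains on the
diagonal of A. -/
theorem grace_walsh_szego_convex (n : ℕ) (hn : 1 ≤ n)
    (f : MvPolynomial (Fin n) ℂ) (hma : IsMultiaffine f)
    (hsym : ∀ σ : Equiv.Perm (Fin n), rename ⇑σ f = f)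
    (A : Set ℂ) (hA : IsCircularRegion A) (hconv : Convex ℝ A)
    (ζ : Fin n → ℂ) (hζ : ∀ i, ζ i ∈ A) :
    ∃ z ∈ A, eval ζ f = eval (fun _ => z) f := by
  have huniv : (Finset.univ : Finset (Fin n)).Nonempty := ⟨⟨0, hn⟩, Finset.mem_univ _⟩
  obtain ⟨z, hz, h⟩ := hA.exists_eval_eq_eval_piecewise hconv hma hsym huniv ζ fun i _ => hζ i
  exact ⟨z, hz, by rwa [Finset.piecewise_univ] at h⟩
end

section
/- Let n ≥ 1 and let G ≤ S_n be a permutation group. Suppose that for every multiaffine G-invariant polynomial f ∈ ℂ[z_1,…,z_n] and every ζ_1,…,ζ_n in the open upper half-plane H there exists ζ ∈ H such that f(ζ_1,…,ζ_n) = f(ζ,…,ζ). Then the polynomial F(z_1,…,z_n,w_1,…,w_n) = (1/|G|) ∑_{σ∈G} ∏_{j=1}^n (z_{σ(j)} + w_j) is stable, i.e., nonvanishing whenever all of z_1,…,z_n,w_1,…,w_n lie in H. -/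
open MvPolynomial
open scoped Classical

/-- A polynomial is stable if it is nonvanishing whenever all arguments lie in the
open upper half-plane `H = {z : ℂ | 0 < z.im}`. -/
def IsStable {σ : Type*} (f : MvPolynomial σ ℂ) : Prop :=
  ∀ x : σ → ℂ, (∀ i, 0 < (x i).im) → eval x f ≠ 0

/-- The `G`-symmetrizer `T_G = (1/|G|) ∑_{σ ∈ G} σ` applied to `f`. -/
noncomputable def symmG {n : ℕ} (G : Subgroup (Equiv.Perm (Fin n)))
    (f : MvPolynomial (Fin n) ℂ) : MvPolynomial (Fin n) ℂ :=
  (Nat.card G : ℂ)⁻¹ • ∑ σ : G, rename (⇑(σ : Equiv.Perm (Fin n))) f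

/-- `G` is orbit homogeneous: whenever two subsets `A, B` of `{1,…,n}` satisfy
`|A ∩ S| = |B ∩ S|` for every orbit `S` of `G`, some `σ ∈ G` maps `A` onto `B`. -/
def OrbitHomogeneous {n : ℕ} (G : Subgroup (Equiv.Perm (Fin n))) : Prop :=
  ∀ A B : Finset (Fin n),
    (∀ i : Fin n, ((A : Set (Fin n)) ∩ MulAction.orbit G i).ncard
      = ((B : Set (Fin n)) ∩ MulAction.orbit G i).ncard) →
    ∃ σ ∈ G, A.image ⇑σ = B

/-! Fix `w ∈ Hⁿ` and put `f = ∑_{σ ∈ G} ∏_j (z_{σ(j)} + w_j)`, a multiaffine `G`-invariant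
polynomial in `z` with `F(z, w) = f(z) / |G|`. The coincidence property gives `ζ ∈ H` with
`f(z) = f(ζ, …, ζ) = |G| ∏_j (ζ + w_j)`, and every factor `ζ + w_j` lies in `H`. -/

lemma IsMultiaffine.sum {ι κ : Type*} (s : Finset ι) (f : ι → MvPolynomial κ ℂ)
    (hf : ∀ k ∈ s, IsMultiaffine (f k)) : IsMultiaffine (∑ k ∈ s, f k) := fun i =>
  (degreeOf_sum_le i s f).trans (Finset.sup_le fun k hk => hf k hk i)

lemma degreeOf_X_add_C_le {R κ : Type*} [CommSemiring R] [Nontrivial R] (i j : κ) (c : R) :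
    degreeOf i (X j + C c : MvPolynomial κ R) ≤ if j = i then 1 else 0 := by
  refine (degreeOf_add_le _ _ _).trans ?_
  by_cases h : j = i
  · simp [h, degreeOf_C]
  · simp [degreeOf_X_of_ne (Ne.symm h), degreeOf_C, h]

lemma isMultiaffine_prod_X_add_C {ι : Type*} [Fintype ι] (σ : Equiv.Perm ι) (c : ι → ℂ) :
    IsMultiaffine (∏ j, (X (σ j) + C (c j)) : MvPolynomial ι ℂ) := by
  intro i
  calc degreeOf i (∏ j, (X (σ j) + C (c j)) : MvPolynomial ι ℂ)
      ≤ ∑ j, degreeOf i (X (σ j) + C (c j) : MvPolynomial ι ℂ) := degreeOf_prod_le _ _ _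
    _ ≤ ∑ j, if j = σ⁻¹ i then 1 else 0 :=
        Finset.sum_le_sum fun j _ => by
          simpa only [Equiv.Perm.eq_inv_iff_eq] using degreeOf_X_add_C_le i (σ j) (c j)
    _ = 1 := by simp

section SymmProdAdd

variable {ι : Type*} [Fintype ι] [DecidableEq ι] (G : Subgroup (Equiv.Perm ι)) (w : ι → ℂ)

noncomputable def symmProdAdd : MvPolynomial ι ℂ :=
  ∑ σ : G, ∏ j, (X ((σ : Equiv.Perm ι) j) + C (w j))

lemma isMultiaffine_symmProdAdd : IsMultiaffine (symmProdAdd G w) :=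
  IsMultiaffine.sum _ _ fun _ _ => isMultiaffine_prod_X_add_C _ w

lemma rename_symmProdAdd {τ : Equiv.Perm ι} (hτ : τ ∈ G) :
    rename τ (symmProdAdd G w) = symmProdAdd G w := by
  simp only [symmProdAdd, map_sum, map_prod, map_add, rename_X, rename_C]
  exact Fintype.sum_equiv (Equiv.mulLeft (⟨τ, hτ⟩ : G)) _ _ fun σ => rfl

lemma eval_const_symmProdAdd (z : ℂ) :
    eval (fun _ => z) (symmProdAdd G w) = Nat.card G * ∏ j, (z + w j) := by
  simp [symmProdAdd, Nat.card_eq_fintype_card]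

lemma eval_sum_prod_X_inl_add_X_inr (x : ι ⊕ ι → ℂ) :
    eval x (∑ σ : G, ∏ j, (X (Sum.inl ((σ : Equiv.Perm ι) j)) + X (Sum.inr j))) =
      eval (x ∘ Sum.inl) (symmProdAdd G (x ∘ Sum.inr)) := by
  simp [symmProdAdd]

end SymmProdAdd

lemma prod_add_ne_zero_of_im_pos {ι : Type*} (s : Finset ι) {z : ℂ} {w : ι → ℂ}
    (hz : 0 < z.im) (hw : ∀ j, 0 < (w j).im) : ∏ j ∈ s, (z + w j) ≠ 0 :=
  Finset.prod_ne_zero_iff.mpr fun j _ h => by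
    have := congrArg Complex.im h
    rw [Complex.add_im, Complex.zero_im] at this
    linarith [hw j]

theorem coincidence_property_implies_F_stable_general
    (n : ℕ) (G : Subgroup (Equiv.Perm (Fin n)))
    (hG : ∀ f : MvPolynomial (Fin n) ℂ, IsMultiaffine f →
      (∀ σ ∈ G, rename ⇑σ f = f) →
      ∀ ζ : Fin n → ℂ, (∀ i, 0 < (ζ i).im) →
        ∃ z : ℂ, 0 < z.im ∧ eval ζ f = eval (fun _ => z) f) :
    IsStable ((Nat.card G : ℂ)⁻¹ • ∑ σ : G, ∏ j : Fin n,
      (X (Sum.inl ((σ : Equiv.Perm (Fin n)) j)) + X (Sum.inr j) :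
        MvPolynomial (Fin n ⊕ Fin n) ℂ)) := by
  intro x hx
  obtain ⟨ζ, hζ, hcoinc⟩ := hG _ (isMultiaffine_symmProdAdd G (x ∘ Sum.inr))
    (fun τ hτ => rename_symmProdAdd G _ hτ) (x ∘ Sum.inl) fun i => hx _
  have hcard : (Nat.card G : ℂ) ≠ 0 := Nat.cast_ne_zero.mpr Nat.card_pos.ne'
  rw [smul_eval, eval_sum_prod_X_inl_add_X_inr, hcoinc, eval_const_symmProdAdd,
    inv_mul_cancel_left₀ hcard]
  exact prod_add_ne_zero_of_im_pos _ hζ fun j => hx _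

/-- If every multiaffine G-invariant polynomial satisfies the coincidence property
on the open upper half-plane, then the polynomial
`F(z,w) = (1/|G|) ∑_{σ ∈ G} ∏_j (z_{σ(j)} + w_j)` is stable. -/
theorem coincidence_property_implies_F_stable
    (n : ℕ) (hn : 1 ≤ n) (G : Subgroup (Equiv.Perm (Fin n)))
    (hG : ∀ f : MvPolynomial (Fin n) ℂ, IsMultiaffine f →
      (∀ σ ∈ G, rename ⇑σ f = f) →
      ∀ ζ : Fin n → ℂ, (∀ i, 0 < (ζ i).im) →
        ∃ z : ℂ, 0 < z.im ∧ eval ζ f = eval (fun _ => z) f) :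
    IsStable ((Nat.card G : ℂ)⁻¹ • ∑ σ : G, ∏ j : Fin n,
      (X (Sum.inl ((σ : Equiv.Perm (Fin n)) j)) + X (Sum.inr j) :
        MvPolynomial (Fin n ⊕ Fin n) ℂ)) :=
  coincidence_property_implies_F_stable_general n G hG
end
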